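/- Let f₀, …, f_N be linearly independent holomorphic functions on a connected open set U ⊆ ℂⁿ, and let c : Fin (N+1) × Fin (N+1) → ℂ be coefficients such that Σ_{j,k} c(j,k) · f_j(z) · conj(f_k(z)) = 0 for all z ∈ U. Then c(j,k) = 0 for all j, k. -/

import Mathlib

open Complex Metric ComplexConjugate Filter Topology

section Helpers

/-- conj ∘ φ ∘ conj is holomorphic when φ is. -/
lemma hasDerivAt_conj_comp {φ : ℂ → ℂ} {d z : ℂ} (h : HasDerivAt φ d (conj z)) :
    HasDerivAt (fun w => conj (φ (conj w))) (conj d) z := by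
  rw [hasDerivAt_iff_tendsto_slope] at h ⊢
  have h1 : Tendsto (fun w : ℂ => conj w) (𝓝[≠] z) (𝓝[≠] (conj z)) := by
    apply tendsto_nhdsWithin_of_tendsto_nhds_of_eventually_within
    · exact (Complex.continuous_conj.tendsto z).mono_left nhdsWithin_le_nhds
    · filter_upwards [eventually_mem_nhdsWithin] with w hw
      simp only [Set.mem_compl_iff, Set.mem_singleton_iff] at hw ⊢
      exact fun hc => hw (star_injective hc)
  have h2 := (Complex.continuous_conj.tendsto d).comp (h.comp h1)
  refine h2.congr' ?_
  filter_upwards [eventually_mem_nhdsWithin] with w hw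
  have hwz : w ≠ z := hw
  simp only [Function.comp_apply, slope_def_field]
  rw [map_div₀]
  simp


lemma diffOn_conj_comp {φ : ℂ → ℂ} {ρ : ℝ} (h : DifferentiableOn ℂ φ (ball (0:ℂ) ρ)) :
    DifferentiableOn ℂ (fun w => conj (φ (conj w))) (ball (0:ℂ) ρ) := by
  intro z hz
  have hz' : conj z ∈ ball (0:ℂ) ρ := by
    simpa [mem_ball_zero_iff] using (mem_ball_zero_iff.mp hz)
  have hd : DifferentiableAt ℂ φ (conj z) :=
    (h (conj z) hz').differentiableAt (isOpen_ball.mem_nhds hz')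
  exact ((hasDerivAt_conj_comp hd.hasDerivAt).differentiableAt).differentiableWithinAt

/-- 1-D identity theorem: holomorphic on a disc, vanishing on the real interval. -/
lemma zero_on_disc {g : ℂ → ℂ} {ρ : ℝ} (hρ : 0 < ρ)
    (hg : DifferentiableOn ℂ g (ball (0:ℂ) ρ))
    (h0 : ∀ x : ℝ, |x| < ρ → g x = 0) : ∀ z ∈ ball (0:ℂ) ρ, g z = 0 := by
  have ha : AnalyticOnNhd ℂ g (ball (0:ℂ) ρ) := hg.analyticOnNhd isOpen_ball
  have hconn : IsPreconnected (ball (0:ℂ) ρ) := (convex_ball _ _).isPreconnected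
  have hmem : (0:ℂ) ∈ ball (0:ℂ) ρ := by simpa using hρ
  have hfreq : ∃ᶠ z in 𝓝[≠] (0:ℂ), g z = 0 := by
    rw [frequently_iff]
    intro s hs
    rw [mem_nhdsWithin_iff] at hs
    obtain ⟨ε, hε, hsub⟩ := hs
    refine ⟨((min ε ρ) / 2 : ℝ), hsub ⟨?_, ?_⟩, ?_⟩
    · simp only [mem_ball_zero_iff]
      rw [Complex.norm_real]
      rw [Real.norm_eq_abs, abs_of_pos (by positivity)]
      calc min ε ρ / 2 < min ε ρ := half_lt_self (lt_min hε hρ)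
        _ ≤ ε := min_le_left _ _
    · simp only [Set.mem_compl_iff, Set.mem_singleton_iff]
      intro hcon
      have : (min ε ρ) / 2 = 0 := by exact_mod_cast hcon
      nlinarith [lt_min hε hρ]
    · apply h0
      rw [abs_of_pos (by positivity)]
      calc min ε ρ / 2 < min ε ρ := half_lt_self (lt_min hε hρ)
        _ ≤ ρ := min_le_right _ _
  exact ha.eqOn_zero_of_preconnected_of_frequently_eq_zero hconn hmem hfreq

section
variable {M : ℕ}

lemma polarization (φ : Fin M → ℂ → ℂ) (c : Fin M × Fin M → ℂ)
    (hφ : ∀ j, DifferentiableOn ℂ (φ j) (ball (0:ℂ) 3))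
    (hd : ∀ t ∈ ball (0:ℂ) 3, ∑ j, ∑ k, c (j, k) * φ j t * conj (φ k t) = 0) :
    ∑ j, ∑ k, c (j, k) * φ j (-1) * conj (φ k 1) = 0 := by
  classical
  set ψ : Fin M → ℂ → ℂ := fun k s => conj (φ k (conj s)) with hψdef
  have hψ : ∀ k, DifferentiableOn ℂ (ψ k) (ball (0:ℂ) 3) := fun k => diffOn_conj_comp (hφ k)
  set H : ℂ → ℂ → ℂ := fun x y => ∑ j, ∑ k, c (j, k) * φ j (x + I * y) * ψ k (x - I * y)
    with hHdef
  have hmem1 : ∀ (x y : ℂ), x ∈ ball (0:ℂ) (3/2) → y ∈ ball (0:ℂ) (3/2) →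
      x + I * y ∈ ball (0:ℂ) 3 := by
    intro x y hx hy
    rw [mem_ball_zero_iff] at hx hy ⊢
    calc ‖x + I * y‖ ≤ ‖x‖ + ‖I * y‖ := norm_add_le _ _
      _ = ‖x‖ + ‖y‖ := by simp
      _ < 3 := by linarith
  have hmem2 : ∀ (x y : ℂ), x ∈ ball (0:ℂ) (3/2) → y ∈ ball (0:ℂ) (3/2) →
      x - I * y ∈ ball (0:ℂ) 3 := by
    intro x y hx hy
    rw [mem_ball_zero_iff] at hx hy ⊢
    calc ‖x - I * y‖ ≤ ‖x‖ + ‖I * y‖ := norm_sub_le _ _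
      _ = ‖x‖ + ‖y‖ := by simp
      _ < 3 := by linarith
  -- step i : real points
  have step1 : ∀ x y : ℝ, |x| < 3/2 → |y| < 3/2 → H x y = 0 := by
    intro x y hx hy
    have hx' : (x:ℂ) ∈ ball (0:ℂ) (3/2) := by rwa [mem_ball_zero_iff, Complex.norm_real,
      Real.norm_eq_abs]
    have hy' : (y:ℂ) ∈ ball (0:ℂ) (3/2) := by rwa [mem_ball_zero_iff, Complex.norm_real,
      Real.norm_eq_abs]
    have ht : (x:ℂ) + I * y ∈ ball (0:ℂ) 3 := hmem1 _ _ hx' hy'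
    have hconj : (x:ℂ) - I * y = conj ((x:ℂ) + I * y) := by
      simp [map_add, map_mul, Complex.conj_ofReal]
      ring
    have := hd _ ht
    rw [hHdef]
    simp only [hψdef, hconj, Complex.conj_conj]
    exact this
  -- step ii : fix real x, extend in y
  have step2 : ∀ x : ℝ, |x| < 3/2 → ∀ y ∈ ball (0:ℂ) (3/2), H (x:ℂ) y = 0 := by
    intro x hx
    have hx' : (x:ℂ) ∈ ball (0:ℂ) (3/2) := by rwa [mem_ball_zero_iff, Complex.norm_real,
      Real.norm_eq_abs]
    apply zero_on_disc (by norm_num)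
    · apply DifferentiableOn.fun_sum; intro j _
      apply DifferentiableOn.fun_sum; intro k _
      apply DifferentiableOn.mul
      · apply DifferentiableOn.const_mul
        exact (hφ j).comp ((differentiable_const _).add
          ((differentiable_const I).mul differentiable_id)).differentiableOn
          (fun y hy => hmem1 _ _ hx' hy)
      · exact (hψ k).comp ((differentiable_const _).sub
          ((differentiable_const I).mul differentiable_id)).differentiableOn
          (fun y hy => hmem2 _ _ hx' hy)
    · exact fun y hy => step1 x y hx hy
  -- step iii : extend in x
  have step3 : ∀ y ∈ ball (0:ℂ) (3/2), ∀ x ∈ ball (0:ℂ) (3/2), H x y = 0 := by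
    intro y hy
    apply zero_on_disc (by norm_num)
    · apply DifferentiableOn.fun_sum; intro j _
      apply DifferentiableOn.fun_sum; intro k _
      apply DifferentiableOn.mul
      · apply DifferentiableOn.const_mul
        exact (hφ j).comp (Differentiable.add differentiable_id
          (differentiable_const (I * y))).differentiableOn
          (fun x hx => hmem1 _ _ hx hy)
      · exact (hψ k).comp (Differentiable.sub differentiable_id
          (differentiable_const (I * y))).differentiableOn
          (fun x hx => hmem2 _ _ hx hy)
    · exact fun x hx => step2 x hx y hy
  -- conclude at (x,y) = (0, I)
  have hI : (I:ℂ) ∈ ball (0:ℂ) (3/2) := by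
    rw [mem_ball_zero_iff, Complex.norm_I]
    norm_num
  have h0 : (0:ℂ) ∈ ball (0:ℂ) (3/2) := by
    rw [mem_ball_zero_iff, norm_zero]
    norm_num
  have := step3 I hI 0 h0
  rw [hHdef] at this
  simp only [hψdef] at this
  have e1 : (0:ℂ) + I * I = -1 := by simp [Complex.I_mul_I]
  have e2 : (0:ℂ) - I * I = 1 := by simp [Complex.I_mul_I]
  rw [e1, e2] at this
  simpa using this

end


/-- Identity theorem in a complex normed space, with vanishing on a ball. -/
lemma eqOn_zero_of_ball {E : Type*} [NormedAddCommGroup E] [NormedSpace ℂ E]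
    {U : Set E} (hUo : IsOpen U) (hUc : IsPreconnected U)
    {g : E → ℂ} (hg : DifferentiableOn ℂ g U)
    {z0 : E} {ε : ℝ} (hε : 0 < ε) (hball : ball z0 ε ⊆ U)
    (h0 : ∀ z ∈ ball z0 ε, g z = 0) : ∀ z ∈ U, g z = 0 := by
  set S := {z : E | g =ᶠ[𝓝 z] 0} with hSdef
  have hSo : IsOpen S := by
    apply isOpen_setOf_eventually_nhds (p := fun y => g y = 0)
  -- propagation along complex lines
  have prop : ∀ z ∈ U, ∀ δ > 0, ball z δ ⊆ U → ∀ p ∈ S ∩ ball z (δ/4),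
      ∀ q ∈ ball z (δ/4), g q = 0 := by
    intro z hz δ hδ hbsub p hp q hq
    obtain ⟨hpS, hpb⟩ := hp
    rw [hSdef, Set.mem_setOf_eq, Filter.eventuallyEq_iff_exists_mem] at hpS
    obtain ⟨s, hs, hgs⟩ := hpS
    rw [Metric.mem_nhds_iff] at hs
    obtain ⟨ε', hε', hsub'⟩ := hs
    set γ : ℂ → E := fun t => p + t • (q - p) with hγdef
    have hγdiff : Differentiable ℂ γ :=
      (differentiable_const p).add ((differentiable_id).smul_const (q - p))
    have hqp : ‖q - p‖ < δ / 2 := by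
      rw [mem_ball] at hq hpb
      calc ‖q - p‖ ≤ ‖q - z‖ + ‖z - p‖ := norm_sub_le_norm_sub_add_norm_sub q z p
        _ < δ/4 + δ/4 := by
            rw [dist_eq_norm] at hq hpb
            have hzp : ‖z - p‖ < δ/4 := by rw [norm_sub_rev]; exact hpb
            exact add_lt_add hq hzp
        _ = δ/2 := by ring
    have hmaps : Set.MapsTo γ (ball (0:ℂ) (3/2)) (ball z δ) := by
      intro t ht
      rw [mem_ball_zero_iff] at ht
      rw [mem_ball, dist_eq_norm, hγdef]
      calc ‖p + t • (q - p) - z‖ ≤ ‖p - z‖ + ‖t • (q - p)‖ := by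
            rw [add_sub_right_comm]; exact norm_add_le _ _
        _ = ‖p - z‖ + ‖t‖ * ‖q - p‖ := by rw [norm_smul]
        _ ≤ ‖p - z‖ + (3/2) * ‖q - p‖ := by
            have := mul_le_mul_of_nonneg_right (le_of_lt ht) (norm_nonneg (q - p))
            linarith
        _ < δ/4 + (3/2) * (δ/2) := by
            have h1 : ‖p - z‖ < δ/4 := by rw [mem_ball, dist_eq_norm] at hpb; exact hpb
            have h2 : (3/2:ℝ) * ‖q - p‖ < (3/2) * (δ/2) := by linarith
            linarith
        _ = δ := by ring
    have hG : DifferentiableOn ℂ (g ∘ γ) (ball (0:ℂ) (3/2)) :=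
      hg.comp hγdiff.differentiableOn (fun t ht => hbsub (hmaps ht))
    have hGa : AnalyticOnNhd ℂ (g ∘ γ) (ball (0:ℂ) (3/2)) := hG.analyticOnNhd isOpen_ball
    have hev : (g ∘ γ) =ᶠ[𝓝 (0:ℂ)] 0 := by
      refine Filter.eventuallyEq_of_mem
        (Metric.ball_mem_nhds (0:ℂ) (by positivity : (0:ℝ) < ε' / (‖q - p‖ + 1))) ?_
      intro t ht
      rw [mem_ball_zero_iff] at ht
      have : ‖γ t - p‖ < ε' := by
        rw [hγdef]
        simp only [add_sub_cancel_left, norm_smul]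
        calc ‖t‖ * ‖q - p‖ ≤ ‖t‖ * (‖q - p‖ + 1) := by
              have := norm_nonneg t; nlinarith
          _ < (ε' / (‖q - p‖ + 1)) * (‖q - p‖ + 1) := by
              apply mul_lt_mul_of_pos_right ht; positivity
          _ = ε' := by field_simp
      have hmem : γ t ∈ ball p ε' := by
        rw [mem_ball, dist_eq_norm]
        exact this
      simpa using hgs (hsub' hmem)
    have := hGa.eqOn_zero_of_preconnected_of_eventuallyEq_zero
      (convex_ball _ _).isPreconnected (by simp [mem_ball_zero_iff]) hev
    have h1 : (1:ℂ) ∈ ball (0:ℂ) (3/2) := by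
      rw [mem_ball_zero_iff, norm_one]; norm_num
    have := this h1
    simpa [hγdef] using this
  -- closure S ∩ U ⊆ S
  have hclos : closure S ∩ U ⊆ S := by
    rintro z ⟨hzc, hzU⟩
    obtain ⟨δ, hδ, hbsub⟩ := Metric.isOpen_iff.mp hUo z hzU
    have hmeet : (S ∩ ball z (δ/4)).Nonempty := by
      rw [Set.inter_comm]
      exact mem_closure_iff.mp hzc _ isOpen_ball (mem_ball_self (by positivity))
    obtain ⟨p, hpmem⟩ := hmeet
    rw [hSdef, Set.mem_setOf_eq, Filter.eventuallyEq_iff_exists_mem]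
    refine ⟨ball z (δ/4), isOpen_ball.mem_nhds (mem_ball_self (by positivity)), ?_⟩
    exact fun q hq => prop z hzU δ hδ hbsub p hpmem q hq
  have hne : (U ∩ S).Nonempty := by
    refine ⟨z0, hball (mem_ball_self hε), ?_⟩
    rw [hSdef, Set.mem_setOf_eq, Filter.eventuallyEq_iff_exists_mem]
    exact ⟨ball z0 ε, isOpen_ball.mem_nhds (mem_ball_self hε), h0⟩
  have hsub : U ⊆ S := hUc.subset_of_closure_inter_subset hSo hne hclos
  intro z hz
  exact (hsub hz).self_of_nhds

end Helpers

/-- If `f₀, …, f_N` are linearly independent holomorphic functions on a connected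
open set `U ⊆ ℂⁿ` and `∑ c (j,k) • f j • conj (f k) = 0` on `U`, then all
coefficients `c (j,k)` vanish. -/
theorem coeff_zero_of_sum_holomorphic_conj (n N : ℕ)
    (U : Set (EuclideanSpace ℂ (Fin n))) (hUopen : IsOpen U) (hUconn : IsConnected U)
    (f : Fin (N + 1) → EuclideanSpace ℂ (Fin n) → ℂ)
    (hf : ∀ j, DifferentiableOn ℂ (f j) U)
    (hli : LinearIndependent ℂ (fun j => U.restrict (f j)))
    (c : Fin (N + 1) × Fin (N + 1) → ℂ)
    (hc : ∀ z ∈ U, ∑ j : Fin (N + 1), ∑ k : Fin (N + 1),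
      c (j, k) * f j z * starRingEnd ℂ (f k z) = 0) :
    ∀ j k, c (j, k) = 0 := by
  classical
  obtain ⟨z0, hz0⟩ := hUconn.nonempty
  obtain ⟨r, hr, hrsub⟩ := Metric.isOpen_iff.mp hUopen z0 hz0
  set F : EuclideanSpace ℂ (Fin n) → EuclideanSpace ℂ (Fin n) → ℂ :=
    fun z w => ∑ j, ∑ k, c (j, k) * f j z * conj (f k w) with hF
  have hb4 : ball z0 (r/4) ⊆ U := (ball_subset_ball (by linarith)).trans hrsub
  -- local polarization
  have hlocal : ∀ z ∈ ball z0 (r/4), ∀ w ∈ ball z0 (r/4), F z w = 0 := by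
    intro z hz w hw
    rw [mem_ball, dist_eq_norm] at hz hw
    set m : EuclideanSpace ℂ (Fin n) := (2⁻¹:ℂ) • (z + w) with hm
    set v : EuclideanSpace ℂ (Fin n) := (2⁻¹:ℂ) • (w - z) with hv
    set γ : ℂ → EuclideanSpace ℂ (Fin n) := fun t => m + t • v with hγ
    have hmz : ‖m - z0‖ < r/4 := by
      have e : m - z0 = (2⁻¹:ℂ) • ((z - z0) + (w - z0)) := by rw [hm]; module
      rw [e, norm_smul]
      have : ‖(2⁻¹:ℂ)‖ = 2⁻¹ := by norm_num
      rw [this]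
      have := norm_add_le (z - z0) (w - z0)
      have hnn := norm_nonneg ((z - z0) + (w - z0))
      nlinarith
    have hvn : ‖v‖ < r/4 := by
      have e : ‖v‖ = 2⁻¹ * ‖w - z‖ := by
        rw [hv, norm_smul]; norm_num
      have : ‖w - z‖ ≤ ‖w - z0‖ + ‖z0 - z‖ := norm_sub_le_norm_sub_add_norm_sub w z0 z
      rw [norm_sub_rev z0 z] at this
      nlinarith
    have hmaps : Set.MapsTo γ (ball (0:ℂ) 3) (ball z0 r) := by
      intro t ht
      rw [mem_ball_zero_iff] at ht
      rw [mem_ball, dist_eq_norm, hγ]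
      calc ‖m + t • v - z0‖ ≤ ‖m - z0‖ + ‖t • v‖ := by
            rw [add_sub_right_comm]; exact norm_add_le _ _
        _ = ‖m - z0‖ + ‖t‖ * ‖v‖ := by rw [norm_smul]
        _ ≤ ‖m - z0‖ + 3 * ‖v‖ := by
            have := mul_le_mul_of_nonneg_right (le_of_lt ht) (norm_nonneg v)
            linarith
        _ < r/4 + 3 * (r/4) := by nlinarith [norm_nonneg v]
        _ = r := by ring
    have hφ : ∀ j, DifferentiableOn ℂ (fun t => f j (γ t)) (ball (0:ℂ) 3) := by
      intro j
      exact (hf j).comp ((differentiable_const m).add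
        ((differentiable_id).smul_const v)).differentiableOn
        (fun t ht => hrsub (hmaps ht))
    have hdiag : ∀ t ∈ ball (0:ℂ) 3,
        ∑ j, ∑ k, c (j, k) * f j (γ t) * conj (f k (γ t)) = 0 :=
      fun t ht => hc (γ t) (hrsub (hmaps ht))
    have hpol := polarization (fun j t => f j (γ t)) c hφ hdiag
    have hγ1 : γ 1 = w := by rw [hγ]; simp only [one_smul]; rw [hm, hv]; module
    have hγm1 : γ (-1) = z := by rw [hγ]; rw [hm, hv]; module
    simp only [hγ1, hγm1] at hpol
    rw [hF]
    exact hpol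
  -- extend in z
  have c1 : ∀ w ∈ ball z0 (r/4), ∀ z ∈ U, F z w = 0 := by
    intro w hw
    refine eqOn_zero_of_ball hUopen hUconn.isPreconnected ?_ (by positivity) hb4
      (fun z hz => hlocal z hz w hw)
    apply DifferentiableOn.fun_sum; intro j _
    apply DifferentiableOn.fun_sum; intro k _
    exact ((hf j).const_mul (c (j, k))).mul_const (conj (f k w))
  -- extend in w
  have c2 : ∀ z ∈ U, ∀ w ∈ U, F z w = 0 := by
    intro z hz
    have hg : ∀ w' ∈ U, (∑ j, ∑ k, conj (c (j, k)) * conj (f j z) * f k w') = 0 := by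
      refine eqOn_zero_of_ball hUopen hUconn.isPreconnected ?_ (by positivity) hb4 ?_
      · apply DifferentiableOn.fun_sum; intro j _
        apply DifferentiableOn.fun_sum; intro k _
        exact (hf k).const_mul _
      · intro w' hw'
        have h1 := c1 w' hw' z hz
        have h2 : conj (F z w') = 0 := by rw [h1]; simp
        rw [hF] at h2
        simpa [map_sum, map_mul] using h2
    intro w hw
    have h2 : conj (F z w) = 0 := by
      rw [hF]
      rw [show conj (∑ j, ∑ k, c (j, k) * f j z * conj (f k w))
          = ∑ j, ∑ k, conj (c (j, k)) * conj (f j z) * f k w from by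
        simp [map_sum, map_mul]]
      exact hg w hw
    simpa using congrArg conj h2
  -- use linear independence, twice
  have d1 : ∀ w ∈ U, ∀ j, ∑ k, c (j, k) * conj (f k w) = 0 := by
    intro w hw j
    have key : ∑ j' : Fin (N+1), (∑ k, c (j', k) * conj (f k w)) • U.restrict (f j') = 0 := by
      funext u
      simp only [Finset.sum_apply, Pi.smul_apply, smul_eq_mul, Pi.zero_apply,
        Set.restrict_apply]
      have h3 := c2 u.1 u.2 w hw
      rw [hF] at h3
      rw [← h3]
      refine Finset.sum_congr rfl (fun j' _ => ?_)
      rw [Finset.sum_mul]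
      exact Finset.sum_congr rfl (fun k _ => by change c (j', k) * conj (f k w) * f j' u = _; ring)
    exact linearIndependent_iff'.mp hli Finset.univ _ key j (Finset.mem_univ j)
  intro j k
  have key2 : ∑ k' : Fin (N+1), conj (c (j, k')) • U.restrict (f k') = 0 := by
    funext w
    simp only [Finset.sum_apply, Pi.smul_apply, smul_eq_mul, Pi.zero_apply,
      Set.restrict_apply]
    have := congrArg conj (d1 w.1 w.2 j)
    exact (by simpa [map_sum, map_mul] using this : ∑ x, conj (c (j, x)) * f x w.1 = 0)
  have hz := linearIndependent_iff'.mp hli Finset.univ _ key2 k (Finset.mem_univ k)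
  have : c (j, k) = conj (conj (c (j, k))) := by simp
  rw [this, hz]; simp
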